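/- arXiv:1509.05612 — 5 statements merged into one kernel-verified Lean document; each statement's English description precedes it below -/
import Mathlib

section
/- Let I = (G, T, R, k, l) be an MMCU instance and let v ∈ V(G) \ T. Assume there exist k + l + 2 paths P_1, ..., P_{k+l+2} in G such that: each P_i is a simple path starting at v and ending at a terminal v_i ∈ T; any two of the paths are vertex-disjoint except for the common vertex v; and (v_i, v_j) ∉ R for all i ≠ j. Then every solution (X, F) of I satisfies v ∈ X. -/
/-- A multigraph on vertex type `V` with edge type `E`: each edge has an
unordered pair of endpoints. -/
structure Multigraph (V : Type*) (E : Type*) where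
  ends : E → Sym2 V

namespace Multigraph

variable {V E : Type*}

/-- The multigraph has no self-loops. -/
def Loopless (G : Multigraph V E) : Prop := ∀ e : E, ¬ (G.ends e).IsDiag

/-- Two vertices are adjacent if some edge joins them. -/
def Adj (G : Multigraph V E) (a b : V) : Prop := ∃ e : E, G.ends e = s(a, b)

/-- The (open) neighbourhood of a vertex. -/
def nbhd (G : Multigraph V E) (v : V) : Set V := {u | G.Adj v u}

/-- The neighbourhood `N_G(D)` of a set of vertices. -/
def setNbhd (G : Multigraph V E) (D : Set V) : Set V :=
  {u | u ∉ D ∧ ∃ d ∈ D, G.Adj u d}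

/-- One step along an edge of `G − (X, F)`. -/
def Step (G : Multigraph V E) (X : Set V) (F : Set E) (a b : V) : Prop :=
  a ∉ X ∧ b ∉ X ∧ ∃ e : E, e ∉ F ∧ G.ends e = s(a, b)

/-- `u` and `v` lie in the same connected component of `G − (X, F)`. -/
def Conn (G : Multigraph V E) (X : Set V) (F : Set E) (u v : V) : Prop :=
  u ∉ X ∧ v ∉ X ∧ Relation.ReflTransGen (G.Step X F) u v

end Multigraph

/-- `R` is an equivalence relation on the set `T` (and vanishes outside `T`). -/
def IsEquivOn {V : Type*} (T : Set V) (R : V → V → Prop) : Prop :=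
  (∀ u v, R u v → u ∈ T ∧ v ∈ T) ∧ (∀ u ∈ T, R u u) ∧
    (∀ u v, R u v → R v u) ∧ (∀ u v w, R u v → R v w → R u w)

/-- `(X, F)` is a solution to the MMCU instance `(G, T, R, k, l)`. -/
def IsSolution {V E : Type*} (G : Multigraph V E) (T : Set V) (R : V → V → Prop)
    (k l : ℕ) (X : Set V) (F : Set E) : Prop :=
  X ⊆ Tᶜ ∧ X.ncard ≤ k ∧ F.ncard ≤ l ∧
    ∀ u ∈ T, ∀ v ∈ T, (G.Conn X F u v ↔ R u v)

/-- `(X, F)` is a minimal solution to the MMCU instance `(G, T, R, k, l)`. -/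
def IsMinSolution {V E : Type*} (G : Multigraph V E) (T : Set V) (R : V → V → Prop)
    (k l : ℕ) (X : Set V) (F : Set E) : Prop :=
  IsSolution G T R k l X F ∧
    ∀ X' F', IsSolution G T R k l X' F' → X' ⊆ X → F' ⊆ F → X' = X ∧ F' = F

/-- A family of `n` simple paths in `G`, each starting at `v` and ending at a
terminal, pairwise vertex-disjoint except for `v`, whose terminal endpoints lie
in pairwise different equivalence classes of `R`. -/
def IsFan {V E : Type*} (G : Multigraph V E) (T : Set V) (R : V → V → Prop)
    (n : ℕ) (v : V) : Prop :=
  ∃ (p : Fin n → List V) (tv : Fin n → V),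
    (∀ i, (p i).Nodup ∧ (p i).Chain' G.Adj ∧
      (p i).head? = some v ∧ (p i).getLast? = some (tv i) ∧ tv i ∈ T) ∧
    (∀ i j, i ≠ j → ∀ x, x ∈ p i → x ∈ p j → x = v) ∧
    (∀ i j, i ≠ j → ¬ R (tv i) (tv j))

/-!
Suppose `v ∉ X`. A deleted vertex lies on at most one path of the fan, since the paths share
only `v`; a deleted edge also lies on at most one path, since otherwise both of its ends would
be `v`, which a simple path cannot traverse. So `(X, F)` hits at most `k + l` of the `k + l + 2`
paths, and the two surviving ones join their terminals through `v` in `G − (X, F)`, although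
these terminals are not `R`-related.
-/

theorem Set.ncard_le_ncard_of_forall_subsingleton {ι β : Type*} {s : Set ι} {t : Set β}
    (r : ι → β → Prop) (hs : ∀ i ∈ s, ∃ b ∈ t, r i b)
    (ht : ∀ b ∈ t, {i | i ∈ s ∧ r i b}.Subsingleton) (htf : t.Finite) : s.ncard ≤ t.ncard := by
  have : Finite t := htf
  choose f hft hfr using hs
  rw [← Nat.card_coe_set_eq, ← Nat.card_coe_set_eq]
  refine Nat.card_le_card_of_injective (fun i : s => (⟨f i i.2, hft i i.2⟩ : t)) fun i j hij => ?_
  have hfij : f i i.2 = f j j.2 := congrArg Subtype.val hij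
  exact Subtype.ext (ht _ (hft i i.2) ⟨i.2, hfr i i.2⟩ ⟨j.2, hfij ▸ hfr j j.2⟩)

namespace Multigraph

variable {V E : Type*} (G : Multigraph V E)

def UsesEdge (L : List V) (e : E) : Prop :=
  ∃ a b, G.ends e = s(a, b) ∧ [a, b] <:+: L

def Hits (X : Set V) (F : Set E) (L : List V) : Prop :=
  (∃ x ∈ L, x ∈ X) ∨ ∃ e ∈ F, G.UsesEdge L e

variable {G}

theorem UsesEdge.mem_of_mem_ends {L : List V} {e : E} (h : G.UsesEdge L e) {x : V}
    (hx : x ∈ G.ends e) : x ∈ L := by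
  obtain ⟨a, b, hab, hinf⟩ := h
  rw [hab, Sym2.mem_iff] at hx
  rcases hx with rfl | rfl <;> exact hinf.subset (by simp)

theorem UsesEdge.not_isDiag {L : List V} {e : E} (h : G.UsesEdge L e) (hL : L.Nodup) :
    ¬ (G.ends e).IsDiag := by
  obtain ⟨a, b, hab, hinf⟩ := h
  rw [hab, Sym2.mk_isDiag_iff]
  simpa using (hinf.nodup hL)

variable {X : Set V} {F : Set E}

theorem Step.symm {a b : V} (h : G.Step X F a b) : G.Step X F b a := by
  obtain ⟨ha, hb, e, heF, he⟩ := h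
  exact ⟨hb, ha, e, heF, he.trans Sym2.eq_swap⟩

theorem Conn.symm {a b : V} (h : G.Conn X F a b) : G.Conn X F b a :=
  ⟨h.2.1, h.1,
    Relation.ReflTransGen.mono (fun _ _ => Step.symm) _ _ (Relation.ReflTransGen.swap _ _ h.2.2)⟩

theorem Conn.trans {a b c : V} (hab : G.Conn X F a b) (hbc : G.Conn X F b c) :
    G.Conn X F a c :=
  ⟨hab.1, hbc.2.1, hab.2.2.trans hbc.2.2⟩

theorem conn_of_not_hits {L : List V} {a b : V} (hL : L.IsChain G.Adj)
    (hhits : ¬ G.Hits X F L) (ha : L.head? = some a) (hb : L.getLast? = some b) :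
    G.Conn X F a b := by
  simp only [Hits, not_or, not_exists, not_and] at hhits
  obtain ⟨hX, hF⟩ := hhits
  have hStep : L.IsChain (G.Step X F) := by
    refine List.isChain_iff_forall_rel_of_append_cons_cons.mpr fun {x y l₁ l₂} hL' => ?_
    subst hL'
    obtain ⟨e, he⟩ := List.isChain_iff_forall_rel_of_append_cons_cons.mp hL rfl
    exact ⟨hX x (by simp), hX y (by simp), e, fun heF => hF e heF ⟨x, y, he, l₁, l₂, by simp⟩,
      he⟩
  obtain ⟨L', rfl⟩ := List.head?_eq_some_iff.mp ha
  refine ⟨hX a (by simp), hX b (List.mem_of_getLast? hb), ?_⟩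
  exact List.relationReflTransGen_of_exists_isChain_cons L' hStep
    (Option.some_injective _ ((List.getLast?_eq_some_getLast _).symm.trans hb))

variable {ι : Type*} {p : ι → List V} {v : V}

theorem ncard_setOf_hits_le [Finite V] [Finite E] (hnodup : ∀ i, (p i).Nodup)
    (hdisj : Pairwise fun i j => ∀ x, x ∈ p i → x ∈ p j → x = v) (hvX : v ∉ X) :
    {i | G.Hits X F (p i)}.ncard ≤ X.ncard + F.ncard := by
  refine (Set.ncard_union_le _ _).trans (add_le_add ?_ ?_)
  · refine Set.ncard_le_ncard_of_forall_subsingleton (fun i x => x ∈ p i)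
      (fun i ⟨x, hx, hxX⟩ => ⟨x, hxX, hx⟩) (fun x hxX i ⟨_, hi⟩ j ⟨_, hj⟩ => ?_) X.toFinite
    by_contra hij
    exact hvX (hdisj hij x hi hj ▸ hxX)
  · refine Set.ncard_le_ncard_of_forall_subsingleton (fun i e => G.UsesEdge (p i) e)
      (fun _ h => h) (fun e _ i ⟨_, hi⟩ j ⟨_, hj⟩ => ?_) F.toFinite
    by_contra hij
    have hv : ∀ x ∈ G.ends e, x = v := fun x hx =>
      hdisj hij x (hi.mem_of_mem_ends hx) (hj.mem_of_mem_ends hx)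
    refine hi.not_isDiag (hnodup i) ?_
    obtain ⟨a, b, hab, _⟩ := hi
    rw [hab, Sym2.mk_isDiag_iff, hv a (by simp [hab]), hv b (by simp [hab])]

end Multigraph

theorem stmt1_general {V E : Type*} [Fintype V] [Fintype E]
    (G : Multigraph V E)
    (T : Set V) (R : V → V → Prop) (k l : ℕ)
    (v : V) (hfan : IsFan G T R (k + l + 2) v) :
    ∀ X F, IsSolution G T R k l X F → v ∈ X := by
  intro X F ⟨_, hXk, hFl, hsep⟩
  by_contra hvX
  obtain ⟨p, tv, hpath, hdisj, hRne⟩ := hfan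
  have hhit : {i | G.Hits X F (p i)}.ncard ≤ k + l :=
    (Multigraph.ncard_setOf_hits_le (fun i => (hpath i).1) hdisj hvX).trans (add_le_add hXk hFl)
  have hmiss : 1 < {i | G.Hits X F (p i)}ᶜ.ncard := by
    have := Set.ncard_add_ncard_compl {i | G.Hits X F (p i)}
    rw [Nat.card_fin] at this
    omega
  obtain ⟨i, j, hi, hj, hij⟩ := (Set.one_lt_ncard_iff (Set.toFinite _)).mp hmiss
  have hconn : ∀ m, ¬ G.Hits X F (p m) → G.Conn X F v (tv m) := fun m hm =>
    Multigraph.conn_of_not_hits (hpath m).2.1 hm (hpath m).2.2.1 (hpath m).2.2.2.1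
  exact hRne i j hij ((hsep _ (hpath i).2.2.2.2 _ (hpath j).2.2.2.2).mp
    ((hconn i hi).symm.trans (hconn j hj)))

/-- If `v ∉ T` admits `k + l + 2` simple paths to terminals of
pairwise different equivalence classes, pairwise vertex-disjoint except for `v`,
then every solution `(X, F)` of the MMCU instance satisfies `v ∈ X`. -/
theorem stmt1 {V E : Type*} [Fintype V] [Fintype E]
    (G : Multigraph V E) (hG : G.Loopless)
    (T : Set V) (R : V → V → Prop) (hR : IsEquivOn T R) (k l : ℕ)
    (v : V) (hv : v ∉ T) (hfan : IsFan G T R (k + l + 2) v) :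
    ∀ X F, IsSolution G T R k l X F → v ∈ X :=
  stmt1_general G T R k l v hfan
end

section
/- Let I = (G, T, R, k, l) be an MMCU instance, let v ∈ V(G) \ T, and let I' = (G', T, R, k, l) where G' is obtained from G by bypassing v. Then: (i) if (X, F) is a solution to I' such that no edge of F has both endpoints in N_G(v), then (X, F) is a solution to I; (ii) if (X, F) is a solution to I such that v ∉ X, no edge of F is incident to v, and no edge of F has both endpoints in N_G(v), then (X, F) is a solution to I'. -/
/-- The graph obtained from `G` by bypassing the vertex `v`: the vertex `v` is removed
(its remaining edges are exactly those of `G` not incident to `v`) and, for every pair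
of distinct neighbours `u₁, u₂` of `v`, an edge `u₁u₂` is added if not already present. -/
def Multigraph.bypass {V E : Type*} (G : Multigraph V E) (v : V) :
    Multigraph V
      ({e : E // v ∉ G.ends e} ⊕
        {p : Sym2 V // ¬ p.IsDiag ∧ (∀ x ∈ p, x ∈ G.nbhd v) ∧ ¬ ∃ e : E, G.ends e = p}) where
  ends := fun f =>
    match f with
    | Sum.inl e => G.ends e.1
    | Sum.inr p => p.1

namespace Multigraph

variable {G : Multigraph V E} {v : V} {X : Set V} {F : Set E}
  {F' : Set ({e : E // v ∉ G.ends e} ⊕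
        {p : Sym2 V // ¬ p.IsDiag ∧ (∀ x ∈ p, x ∈ G.nbhd v) ∧ ¬ ∃ e : E, G.ends e = p})}

lemma ne_of_adj (hG : G.Loopless) {a b : V} (h : G.Adj a b) : a ≠ b := by
  obtain ⟨e, he⟩ := h
  intro hab
  exact hG e (by rw [he, hab]; simp)

lemma bypass_step (hG : G.Loopless)
    (hF'2 : ∀ f ∈ F', ¬ ∀ x ∈ (G.bypass v).ends f, x ∈ G.nbhd v)
    {c d : V} (hc : c ∈ G.nbhd v) (hd : d ∈ G.nbhd v) (hcd : c ≠ d)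
    (hcx : c ∉ X) (hdx : d ∉ X) : (G.bypass v).Step X F' c d := by
  refine ⟨hcx, hdx, ?_⟩
  have hvc : v ≠ c := ne_of_adj hG hc
  have hvd : v ≠ d := ne_of_adj hG hd
  by_cases h : ∃ e : E, G.ends e = s(c, d)
  · obtain ⟨e, he⟩ := h
    have hve : v ∉ G.ends e := by
      rw [he, Sym2.mem_iff]; push_neg; exact ⟨hvc, hvd⟩
    refine ⟨Sum.inl ⟨e, hve⟩, fun hin => hF'2 _ hin ?_, he⟩
    intro x hx
    have hx' : x ∈ s(c, d) := by rw [← he]; exact hx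
    rcases Sym2.mem_iff.mp hx' with rfl | rfl
    exacts [hc, hd]
  · refine ⟨Sum.inr ⟨s(c, d), by simp [hcd], fun x hx => ?_, h⟩,
      fun hin => hF'2 _ hin (fun x hx => ?_), rfl⟩
    · rcases Sym2.mem_iff.mp hx with rfl | rfl
      exacts [hc, hd]
    · rcases Sym2.mem_iff.mp hx with rfl | rfl
      exacts [hc, hd]

lemma walk_fwd (hG : G.Loopless) (hvX : v ∉ X)
    (hiff : ∀ (e : E) (h : v ∉ G.ends e), e ∈ F ↔ Sum.inl ⟨e, h⟩ ∈ F')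
    (hF'2 : ∀ f ∈ F', ¬ ∀ x ∈ (G.bypass v).ends f, x ∈ G.nbhd v)
    {u w : V} (huw : Relation.ReflTransGen (G.Step X F) u w) (hw : w ≠ v) :
    (u ≠ v → Relation.ReflTransGen ((G.bypass v).Step X F') u w) ∧
    (u = v → ∀ c, G.Adj v c → c ∉ X →
      Relation.ReflTransGen ((G.bypass v).Step X F') c w) := by
  induction huw using Relation.ReflTransGen.head_induction_on with
  | refl => exact ⟨fun _ => .refl, fun h => absurd h hw⟩
  | @head a c hstep hrest ih =>
    obtain ⟨hax, hcx, e, heF, hee⟩ := hstep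
    constructor
    · intro hav
      by_cases hcv : c = v
      · subst hcv
        exact ih.2 rfl a ⟨e, hee.trans Sym2.eq_swap⟩ hax
      · have hve : v ∉ G.ends e := by
          rw [hee, Sym2.mem_iff]; push_neg; exact ⟨Ne.symm hav, Ne.symm hcv⟩
        exact (ih.1 hcv).head
          ⟨hax, hcx, Sum.inl ⟨e, hve⟩, fun hin => heF ((hiff e hve).mpr hin), hee⟩
    · intro hav d hd hdx
      have hee' : G.ends e = s(v, c) := hav ▸ hee
      have hcv : c ≠ v := by
        intro h; exact hG e (by rw [hee', h]; simp)
      have hcnb : c ∈ G.nbhd v := ⟨e, hee'⟩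
      by_cases hdc : d = c
      · subst hdc; exact ih.1 hcv
      · exact (ih.1 hcv).head (bypass_step hG hF'2 hd hcnb hdc hdx hcx)

lemma walk_bwd (hG : G.Loopless) (hvX : v ∉ X)
    (hiff : ∀ (e : E) (h : v ∉ G.ends e), e ∈ F ↔ Sum.inl ⟨e, h⟩ ∈ F')
    (hF4 : ∀ e ∈ F, v ∉ G.ends e)
    {u w : V} (h : Relation.ReflTransGen ((G.bypass v).Step X F') u w) :
    Relation.ReflTransGen (G.Step X F) u w := by
  induction h with
  | refl => exact .refl
  | @tail b c hrest hstep ih =>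
    obtain ⟨hax, hbx, f, hfF', hends⟩ := hstep
    cases f with
    | inl e =>
      exact ih.tail ⟨hax, hbx, e.1, fun hF => hfF' ((hiff e.1 e.2).mp hF), hends⟩
    | inr p =>
      obtain ⟨hdiag, hnb, hnoe⟩ := p.2
      have hends' : p.1 = s(b, c) := hends
      have hb : b ∈ G.nbhd v := hnb b (by rw [hends']; exact Sym2.mem_iff.mpr (Or.inl rfl))
      have hc : c ∈ G.nbhd v := hnb c (by rw [hends']; exact Sym2.mem_iff.mpr (Or.inr rfl))
      obtain ⟨e1, he1⟩ := hb
      obtain ⟨e2, he2⟩ := hc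
      have he1F : e1 ∉ F := fun h => hF4 e1 h (by rw [he1]; exact Sym2.mem_iff.mpr (Or.inl rfl))
      have he2F : e2 ∉ F := fun h => hF4 e2 h (by rw [he2]; exact Sym2.mem_iff.mpr (Or.inl rfl))
      exact (ih.tail ⟨hax, hvX, e1, he1F, he1.trans Sym2.eq_swap⟩).tail ⟨hvX, hbx, e2, he2F, he2⟩

lemma conn_iff (hG : G.Loopless) (hvX : v ∉ X)
    (hiff : ∀ (e : E) (h : v ∉ G.ends e), e ∈ F ↔ Sum.inl ⟨e, h⟩ ∈ F')
    (hF4 : ∀ e ∈ F, v ∉ G.ends e)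
    (hF'2 : ∀ f ∈ F', ¬ ∀ x ∈ (G.bypass v).ends f, x ∈ G.nbhd v)
    {u w : V} (hu : u ≠ v) (hw : w ≠ v) :
    G.Conn X F u w ↔ (G.bypass v).Conn X F' u w := by
  constructor
  · rintro ⟨hux, hwx, h⟩
    exact ⟨hux, hwx, (walk_fwd hG hvX hiff hF'2 h hw).1 hu⟩
  · rintro ⟨hux, hwx, h⟩
    exact ⟨hux, hwx, walk_bwd hG hvX hiff hF4 h⟩

end Multigraph

/-- Let `I' = (G', T, R, k, l)` be the instance obtained from
`I = (G, T, R, k, l)` by bypassing a vertex `v ∉ T`. Then: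
(i) any solution `(X, F)` of `I'` in which no edge of `F` has both endpoints in
`N_G(v)` is a solution of `I` (identifying the edges of `F` with edges of `G`);
(ii) any solution `(X, F)` of `I` with `v ∉ X`, no edge of `F` incident to `v` and no
edge of `F` with both endpoints in `N_G(v)` is a solution of `I'`. -/
theorem stmt4 {V E : Type*} [Fintype V] [Fintype E]
    (G : Multigraph V E) (hG : G.Loopless)
    (T : Set V) (R : V → V → Prop) (hR : IsEquivOn T R) (k l : ℕ)
    (v : V) (hv : v ∉ T) :
    (∀ (X : Set V)
        (F' : Set ({e : E // v ∉ G.ends e} ⊕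
          {p : Sym2 V // ¬ p.IsDiag ∧ (∀ x ∈ p, x ∈ G.nbhd v) ∧ ¬ ∃ e : E, G.ends e = p})),
      v ∉ X →
      (∀ f ∈ F', ¬ ∀ x ∈ (G.bypass v).ends f, x ∈ G.nbhd v) →
      IsSolution (G.bypass v) T R k l X F' →
      IsSolution G T R k l X {e : E | ∃ h : v ∉ G.ends e, Sum.inl ⟨e, h⟩ ∈ F'}) ∧
    (∀ (X : Set V) (F : Set E),
      v ∉ X →
      (∀ e ∈ F, v ∉ G.ends e) →
      (∀ e ∈ F, ¬ ∀ x ∈ G.ends e, x ∈ G.nbhd v) →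
      IsSolution G T R k l X F →
      IsSolution (G.bypass v) T R k l X
        {f | ∃ (e : E) (h : v ∉ G.ends e), e ∈ F ∧ f = Sum.inl ⟨e, h⟩}) := by
  constructor
  · intro X F' hvX hF'2 hsol
    obtain ⟨hXT, hXk, hFl, hconn⟩ := hsol
    have hiff : ∀ (e : E) (h : v ∉ G.ends e),
        e ∈ {e : E | ∃ h : v ∉ G.ends e, Sum.inl ⟨e, h⟩ ∈ F'} ↔ Sum.inl ⟨e, h⟩ ∈ F' := by
      intro e h
      constructor
      · rintro ⟨h', hm⟩; exact hm
      · intro hm; exact ⟨h, hm⟩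
    have hF4 : ∀ e ∈ {e : E | ∃ h : v ∉ G.ends e, Sum.inl ⟨e, h⟩ ∈ F'}, v ∉ G.ends e :=
      fun e he => he.choose
    refine ⟨hXT, hXk, ?_, ?_⟩
    · have hFeq : {e : E | ∃ h : v ∉ G.ends e, Sum.inl ⟨e, h⟩ ∈ F'} =
          Subtype.val '' (Sum.inl ⁻¹' F' : Set {e : E // v ∉ G.ends e}) := by
        ext e
        constructor
        · rintro ⟨h, hm⟩; exact ⟨⟨e, h⟩, hm, rfl⟩
        · rintro ⟨⟨e', h⟩, hm, rfl⟩; exact ⟨h, hm⟩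
      rw [hFeq, Set.ncard_image_of_injective _ Subtype.val_injective]
      exact le_trans (Set.ncard_le_ncard_of_injOn Sum.inl (fun a ha => ha)
        Sum.inl_injective.injOn (Set.toFinite _)) hFl
    · intro u hu w hw
      rw [Multigraph.conn_iff hG hvX hiff hF4 hF'2
        (fun h => hv (h ▸ hu)) (fun h => hv (h ▸ hw))]
      exact hconn u hu w hw
  · intro X F hvX hF4 hFN hsol
    obtain ⟨hXT, hXk, hFl, hconn⟩ := hsol
    set F' : Set ({e : E // v ∉ G.ends e} ⊕
        {p : Sym2 V // ¬ p.IsDiag ∧ (∀ x ∈ p, x ∈ G.nbhd v) ∧ ¬ ∃ e : E, G.ends e = p}) :=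
      {f | ∃ (e : E) (h : v ∉ G.ends e), e ∈ F ∧ f = Sum.inl ⟨e, h⟩} with hF'def
    have hiff : ∀ (e : E) (h : v ∉ G.ends e), e ∈ F ↔ Sum.inl ⟨e, h⟩ ∈ F' := by
      intro e h
      constructor
      · intro he; exact ⟨e, h, he, rfl⟩
      · rintro ⟨e', h', he', heq⟩
        simp only [Sum.inl.injEq, Subtype.mk.injEq] at heq
        exact heq ▸ he'
    have hF'2 : ∀ f ∈ F', ¬ ∀ x ∈ (G.bypass v).ends f, x ∈ G.nbhd v := by
      rintro f ⟨e, h, he, rfl⟩ hall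
      exact hFN e he (fun x hx => hall x hx)
    refine ⟨hXT, hXk, ?_, ?_⟩
    · have hFeq : F' = Sum.inl '' (Subtype.val ⁻¹' F : Set {e : E // v ∉ G.ends e}) := by
        ext f
        constructor
        · rintro ⟨e, h, he, rfl⟩; exact ⟨⟨e, h⟩, he, rfl⟩
        · rintro ⟨⟨e, h⟩, he, rfl⟩; exact ⟨e, h, he, rfl⟩
      rw [hFeq, Set.ncard_image_of_injective _ Sum.inl_injective]
      exact le_trans (Set.ncard_le_ncard_of_injOn Subtype.val (fun a ha => ha)
        Subtype.val_injective.injOn (Set.toFinite _)) hFl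
    · intro u hu w hw
      rw [← Multigraph.conn_iff hG hvX hiff hF4 hF'2
        (fun h => hv (h ▸ hu)) (fun h => hv (h ▸ hw))]
      exact hconn u hu w hw
end

section
/- Let I = (G, T, R, k, l) be an MMCU instance where G is a multigraph, and let uv ∈ E(G) be an edge with multiplicity more than l + 1. Then for every minimal solution (X, F) of I, the set F contains no copy of the edge uv. -/
/-!
Deleting all copies of `uv` from `F` does not change the connectivity of `G − (X, F)` as long as
one copy of `uv` survives, and it does not increase `|F|`. A copy survives because `|F| ≤ l` is
smaller than the multiplicity of `uv`. So `(X, F)` minus the copies of `uv` is again a solution,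
and minimality forces `F` to contain no copy at all.
-/

namespace Multigraph

variable {V E : Type*} (G : Multigraph V E)

theorem step_diff_parallel_iff {X : Set V} {F : Set E} {p : Sym2 V} {e₀ : E}
    (he₀ : G.ends e₀ = p) (he₀F : e₀ ∉ F) (a b : V) :
    G.Step X (F \ {e | G.ends e = p}) a b ↔ G.Step X F a b := by
  constructor
  · rintro ⟨ha, hb, e, heF, hends⟩
    refine ⟨ha, hb, ?_⟩
    by_cases he : e ∈ F
    · have hep : G.ends e = p := not_not.mp fun hne => heF ⟨he, hne⟩
      exact ⟨e₀, he₀F, he₀.trans (hep.symm.trans hends)⟩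
    · exact ⟨e, he, hends⟩
  · rintro ⟨ha, hb, e, heF, hends⟩
    exact ⟨ha, hb, e, fun he => heF he.1, hends⟩

theorem conn_diff_parallel {X : Set V} {F : Set E} {p : Sym2 V} {e₀ : E}
    (he₀ : G.ends e₀ = p) (he₀F : e₀ ∉ F) :
    G.Conn X (F \ {e | G.ends e = p}) = G.Conn X F := by
  have hstep : G.Step X (F \ {e | G.ends e = p}) = G.Step X F := by
    ext a b
    exact G.step_diff_parallel_iff he₀ he₀F a b
  unfold Conn
  rw [hstep]

end Multigraph

theorem IsSolution.diff_parallel {V E : Type*} {G : Multigraph V E} {T : Set V}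
    {R : V → V → Prop} {k l : ℕ} {X : Set V} {F : Set E} (hsol : IsSolution G T R k l X F)
    (hF : F.Finite) {p : Sym2 V} {e₀ : E} (he₀ : G.ends e₀ = p) (he₀F : e₀ ∉ F) :
    IsSolution G T R k l X (F \ {e | G.ends e = p}) := by
  obtain ⟨hXT, hk, hl, hconn⟩ := hsol
  refine ⟨hXT, hk, (Set.ncard_le_ncard Set.sdiff_subset hF).trans hl, ?_⟩
  rw [G.conn_diff_parallel he₀ he₀F]
  exact hconn

theorem stmt9_general {V E : Type*} [Fintype E]
    (G : Multigraph V E)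
    (T : Set V) (R : V → V → Prop) (k l : ℕ)
    (u v : V) (hmult : l + 1 < {e : E | G.ends e = s(u, v)}.ncard)
    (X : Set V) (F : Set E) (h : IsMinSolution G T R k l X F) :
    ∀ e : E, G.ends e = s(u, v) → e ∉ F := by
  intro e he heF
  obtain ⟨hsol, hmin⟩ := h
  obtain ⟨e₀, he₀, he₀F⟩ : ∃ e₀, G.ends e₀ = s(u, v) ∧ e₀ ∉ F := by
    by_contra! hall
    have hle : {e : E | G.ends e = s(u, v)}.ncard ≤ F.ncard :=
      Set.ncard_le_ncard hall (Set.toFinite F)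
    have hl := hsol.2.2.1
    omega
  have hsol' := hsol.diff_parallel (Set.toFinite F) he₀ he₀F
  obtain ⟨-, hFeq⟩ := hmin X _ hsol' subset_rfl Set.sdiff_subset
  exact (hFeq ▸ heF).2 he

/-- If the edge `uv` has multiplicity more than `l + 1` in the
multigraph `G`, then no minimal solution `(X, F)` contains any copy of `uv` in `F`. -/
theorem stmt9 {V E : Type*} [Fintype V] [Fintype E]
    (G : Multigraph V E) (hG : G.Loopless)
    (T : Set V) (R : V → V → Prop) (hR : IsEquivOn T R) (k l : ℕ)
    (u v : V) (hmult : l + 1 < {e : E | G.ends e = s(u, v)}.ncard)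
    (X : Set V) (F : Set E) (h : IsMinSolution G T R k l X F) :
    ∀ e : E, G.ends e = s(u, v) → e ∉ F :=
  stmt9_general G T R k l u v hmult X F h
end

section
/- Let G be a bipartite graph with bipartition V(G) = A ⊎ B, without isolated vertices, and let m = |E(G)|. Let G' be the graph obtained from G by adding two new vertices s and t, an edge sa for every a ∈ A, and an edge tb for every b ∈ B. Then for all nonnegative integers p and q with q ≤ m, the following are equivalent: (1) there exists S ⊆ V(G) with |S| ≤ p such that at least q edges of G are incident to a vertex of S; (2) there exist X ⊆ V(G) with |X| ≤ p and F ⊆ E(G) with |F| ≤ m − q such that s and t lie in different connected components of G' − (X, F). -/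
/-- The graph `G'` obtained from the bipartite graph `G` (with parts `A` and `B`) by
adding two new vertices `s = Sum.inr true` and `t = Sum.inr false`, an edge `sa` for
every `a ∈ A` and an edge `tb` for every `b ∈ B`. -/
def addST {V E : Type*} (G : Multigraph V E) (A B : Set V) :
    Multigraph (V ⊕ Bool) (E ⊕ (↥A ⊕ ↥B)) where
  ends := fun f =>
    match f with
    | Sum.inl e => (G.ends e).map Sum.inl
    | Sum.inr (Sum.inl a) => s(Sum.inr true, Sum.inl a.1)
    | Sum.inr (Sum.inr b) => s(Sum.inr false, Sum.inl b.1)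

theorem Set.ncard_compl_le_card_sub_iff {α : Type*} [Finite α] {s : Set α} {q : ℕ}
    (hq : q ≤ Nat.card α) : sᶜ.ncard ≤ Nat.card α - q ↔ q ≤ s.ncard := by
  have := s.ncard_add_ncard_compl
  omega

theorem Relation.ReflTransGen.mem_of_forall_mem_imp {α : Type*} {r : α → α → Prop}
    {C : Set α} (hC : ∀ a b, a ∈ C → r a b → b ∈ C) {a b : α}
    (h : Relation.ReflTransGen r a b) (ha : a ∈ C) : b ∈ C := by
  induction h with
  | refl => exact ha
  | tail _ hbc ih => exact hC _ _ ih hbc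

def Multigraph.coveredEdges {V E : Type*} (G : Multigraph V E) (S : Set V) : Set E :=
  {e | ∃ x ∈ S, x ∈ G.ends e}

section addST

variable {V E : Type*} (G : Multigraph V E) (A B : Set V)

@[simp] theorem addST_ends_inl (e : E) :
    (addST G A B).ends (Sum.inl e) = (G.ends e).map Sum.inl := rfl

@[simp] theorem addST_ends_inr_inl (a : A) :
    (addST G A B).ends (Sum.inr (Sum.inl a)) = s(Sum.inr true, Sum.inl a.1) := rfl

@[simp] theorem addST_ends_inr_inr (b : B) :
    (addST G A B).ends (Sum.inr (Sum.inr b)) = s(Sum.inr false, Sum.inl b.1) := rfl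

variable {G A B} {X : Set V} {F : Set E}

theorem addST_conn_of_ends_eq {e : E} (he : e ∉ F) {a b : V} (hab : G.ends e = s(a, b))
    (ha : a ∈ A) (hb : b ∈ B) (haX : a ∉ X) (hbX : b ∉ X) :
    (addST G A B).Conn (Sum.inl '' X) (Sum.inl '' F) (Sum.inr true) (Sum.inr false) := by
  refine ⟨by simp, by simp, ?_⟩
  have hs : (addST G A B).Step (Sum.inl '' X) (Sum.inl '' F) (Sum.inr true) (Sum.inl a) :=
    ⟨by simp, by simpa using haX, Sum.inr (Sum.inl ⟨a, ha⟩), by simp, rfl⟩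
  have he : (addST G A B).Step (Sum.inl '' X) (Sum.inl '' F) (Sum.inl a) (Sum.inl b) :=
    ⟨by simpa using haX, by simpa using hbX, Sum.inl e, by simpa using he, by simp [hab]⟩
  have ht : (addST G A B).Step (Sum.inl '' X) (Sum.inl '' F) (Sum.inl b) (Sum.inr false) :=
    ⟨by simpa using hbX, by simp, Sum.inr (Sum.inr ⟨b, hb⟩), by simp, Sym2.eq_swap⟩
  exact .tail (.tail (.single hs) he) ht

theorem addST_not_conn_of_compl_coveredEdges_subset
    (hbip : ∀ e : E, ∃ a ∈ A, ∃ b ∈ B, G.ends e = s(a, b)) (hdisj : Disjoint A B)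
    (hF : (G.coveredEdges X)ᶜ ⊆ F) :
    ¬ (addST G A B).Conn (Sum.inl '' X) (Sum.inl '' F) (Sum.inr true) (Sum.inr false) := by
  rintro ⟨-, -, hst⟩
  -- The only edges leaving `{s} ∪ A` are edges of `G` from `A` to `B`, all deleted or meeting `X`.
  suffices Sum.inr false ∈ insert (Sum.inr true) (Sum.inl '' A) by simp at this
  refine hst.mem_of_forall_mem_imp ?_ (by simp)
  rintro x y hx ⟨hxX, hyX, f, hfF, hf⟩
  rcases hx with rfl | ⟨v, hvA, rfl⟩
  · rcases f with e | a | b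
    · obtain ⟨a, -, b, -, hab⟩ := hbip e
      simp [hab] at hf
    · obtain rfl : (Sum.inl a.1 : V ⊕ Bool) = y := by simpa using hf
      exact Or.inr ⟨a, a.2, rfl⟩
    · simp at hf
  · rcases f with e | a | b
    · obtain ⟨a, ha, b, hb, hab⟩ := hbip e
      simp only [addST_ends_inl, hab, Sym2.map_mk, Sym2.eq, Sym2.rel_iff'] at hf
      rcases hf with ⟨rfl, rfl⟩ | ⟨-, rfl⟩
      · have he : e ∈ G.coveredEdges X := by_contra fun he => hfF ⟨e, hF he, rfl⟩
        obtain ⟨x, hx, hxe⟩ := he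
        rw [hab, Sym2.mem_iff] at hxe
        rcases hxe with rfl | rfl
        · exact (hxX ⟨_, hx, rfl⟩).elim
        · exact (hyX ⟨_, hx, rfl⟩).elim
      · exact absurd hb (Set.disjoint_left.1 hdisj hvA)
    · obtain ⟨rfl, -⟩ : Sum.inr true = y ∧ (a : V) = v := by simpa using hf
      exact Or.inl rfl
    · obtain ⟨-, rfl⟩ : Sum.inr false = y ∧ (b : V) = v := by simpa using hf
      exact absurd b.2 (Set.disjoint_left.1 hdisj hvA)

theorem addST_not_conn_iff
    (hbip : ∀ e : E, ∃ a ∈ A, ∃ b ∈ B, G.ends e = s(a, b)) (hdisj : Disjoint A B) :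
    ¬ (addST G A B).Conn (Sum.inl '' X) (Sum.inl '' F) (Sum.inr true) (Sum.inr false) ↔
      (G.coveredEdges X)ᶜ ⊆ F := by
  refine ⟨fun h e he => by_contra fun heF => h ?_,
    addST_not_conn_of_compl_coveredEdges_subset hbip hdisj⟩
  obtain ⟨a, ha, b, hb, hab⟩ := hbip e
  exact addST_conn_of_ends_eq heF hab ha hb (fun hx => he ⟨a, hx, by simp [hab]⟩)
    (fun hx => he ⟨b, hx, by simp [hab]⟩)

end addST

theorem stmt12_general {V E : Type*} [Fintype E]
    (G : Multigraph V E)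
    (A B : Set V) (hdisj : Disjoint A B)
    (hbip : ∀ e : E, ∃ a ∈ A, ∃ b ∈ B, G.ends e = s(a, b))
    (p q : ℕ) (hq : q ≤ Fintype.card E) :
    (∃ S : Set V, S.ncard ≤ p ∧ q ≤ {e : E | ∃ x ∈ S, x ∈ G.ends e}.ncard) ↔
      (∃ (X : Set V) (F : Set E), X.ncard ≤ p ∧ F.ncard ≤ Fintype.card E - q ∧
        ¬ (addST G A B).Conn (Sum.inl '' X)
            (Sum.inl '' F : Set (E ⊕ (↥A ⊕ ↥B)))
            (Sum.inr true) (Sum.inr false)) := by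
  rw [← Nat.card_eq_fintype_card] at hq ⊢
  simp only [addST_not_conn_iff hbip hdisj]
  constructor
  · rintro ⟨S, hS, hcov⟩
    exact ⟨S, _, hS, (Set.ncard_compl_le_card_sub_iff hq).2 hcov, subset_rfl⟩
  · rintro ⟨X, F, hX, hF, hXF⟩
    exact ⟨X, hX, (Set.ncard_compl_le_card_sub_iff hq).1 ((Set.ncard_le_ncard hXF).trans hF)⟩

/-- For a bipartite graph `G` with parts `A, B`, no isolated vertices
and `m` edges, and the graph `G'` obtained by adding `s` adjacent to all of `A` and `t`
adjacent to all of `B`: for all `p` and `q ≤ m`, there is a set `S` of at most `p`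
vertices of `G` covering at least `q` edges of `G` if and only if there are `X ⊆ V(G)`
with `|X| ≤ p` and `F ⊆ E(G)` with `|F| ≤ m − q` whose deletion separates `s` from `t`
in `G'`. -/
theorem stmt12 {V E : Type*} [Fintype V] [Fintype E]
    (G : Multigraph V E) (hG : G.Loopless)
    (A B : Set V) (hpart : A ∪ B = Set.univ) (hdisj : Disjoint A B)
    (hbip : ∀ e : E, ∃ a ∈ A, ∃ b ∈ B, G.ends e = s(a, b))
    (hiso : ∀ v : V, ∃ e : E, v ∈ G.ends e)
    (p q : ℕ) (hq : q ≤ Fintype.card E) :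
    (∃ S : Set V, S.ncard ≤ p ∧ q ≤ {e : E | ∃ x ∈ S, x ∈ G.ends e}.ncard) ↔
      (∃ (X : Set V) (F : Set E), X.ncard ≤ p ∧ F.ncard ≤ Fintype.card E - q ∧
        ¬ (addST G A B).Conn (Sum.inl '' X)
            (Sum.inl '' F : Set (E ⊕ (↥A ⊕ ↥B)))
            (Sum.inr true) (Sum.inr false)) :=
  stmt12_general G A B hdisj hbip p q hq
end

section
/- Let k, l, c and n_0 be nonnegative integers with n_0 ≥ 1. Let N be a finite set with |N| ≤ n_0, let T' be a finite set partitioned into c classes, and for each v ∈ T' let S_v be a nonempty subset of N such that: (i) for every A ⊆ N with |A| = k + l + 1, there is at most one v ∈ T' with A ⊆ S_v; and (ii) for every class of the partition and every B ⊆ N with |B| ≤ k + l, at most l + 2 elements v of that class satisfy S_v = B. Then |T'| ≤ n_0^{k+l+1} + (l+2) · c · Σ_{i=1}^{k+l} n_0^i. -/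
/-- **terminal counting.** Let `N` be a set of at most `n₀` elements,
`T'` a finite set partitioned into `c` classes by `cl`, and for each `v ∈ T'` let
`S v ⊆ N` be nonempty, such that (i) any `(k+l+1)`-subset of `N` is contained in `S v`
for at most one `v ∈ T'`, and (ii) for each class and each `B ⊆ N` with `|B| ≤ k + l`,
at most `l + 2` elements `v` of that class have `S v = B`. Then
`|T'| ≤ n₀^{k+l+1} + (l+2)·c·Σ_{i=1}^{k+l} n₀^i`. -/
theorem stmt15 {α β : Type*} [DecidableEq α] [DecidableEq β]
    (k l c n₀ : ℕ) (hn₀ : 1 ≤ n₀)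
    (N : Finset α) (hN : N.card ≤ n₀)
    (T' : Finset β) (cl : β → Fin c)
    (S : β → Finset α)
    (hSsub : ∀ v ∈ T', S v ⊆ N) (hSne : ∀ v ∈ T', (S v).Nonempty)
    (hone : ∀ A ⊆ N, A.card = k + l + 1 →
      ∀ v ∈ T', ∀ w ∈ T', A ⊆ S v → A ⊆ S w → v = w)
    (hfew : ∀ i : Fin c, ∀ B ⊆ N, B.card ≤ k + l →
      (T'.filter fun v => cl v = i ∧ S v = B).card ≤ l + 2) :
    T'.card ≤ n₀ ^ (k + l + 1) + (l + 2) * c * ∑ i ∈ Finset.Icc 1 (k + l), n₀ ^ i := by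
  classical
  set m := k + l + 1 with hm
  set Big := T'.filter (fun v => m ≤ (S v).card) with hBig
  set Small := T'.filter (fun v => ¬ m ≤ (S v).card) with hSmall
  have hsplit : T'.card = Big.card + Small.card := by
    rw [hBig, hSmall, Finset.card_filter_add_card_filter_not]
  -- Big part
  have hf : ∀ v : β, ∃ A : Finset α, (m ≤ (S v).card → A ⊆ S v ∧ A.card = m) := by
    intro v
    by_cases h : m ≤ (S v).card
    · obtain ⟨A, hA1, hA2⟩ := Finset.exists_subset_card_eq h
      exact ⟨A, fun _ => ⟨hA1, hA2⟩⟩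
    · exact ⟨∅, fun h' => absurd h' h⟩
  choose f hfspec using hf
  have hBigcard : Big.card ≤ n₀ ^ m := by
    have hinj : Set.InjOn f Big := by
      intro v hv w hw hvw
      simp only [hBig, Finset.mem_coe, Finset.mem_filter] at hv hw
      obtain ⟨hv1, hv2⟩ := hv
      obtain ⟨hw1, hw2⟩ := hw
      obtain ⟨hfv1, hfv2⟩ := hfspec v hv2
      obtain ⟨hfw1, _⟩ := hfspec w hw2
      exact hone (f v) (hfv1.trans (hSsub v hv1)) hfv2 v hv1 w hw1 hfv1
        (hvw ▸ hfw1)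
    have hmaps : ∀ v ∈ Big, f v ∈ N.powersetCard m := by
      intro v hv
      simp only [hBig, Finset.mem_filter] at hv
      obtain ⟨hfv1, hfv2⟩ := hfspec v hv.2
      exact Finset.mem_powersetCard.2 ⟨hfv1.trans (hSsub v hv.1), hfv2⟩
    calc Big.card ≤ (N.powersetCard m).card :=
          Finset.card_le_card_of_injOn f hmaps hinj
      _ = N.card.choose m := Finset.card_powersetCard m N
      _ ≤ n₀.choose m := Nat.choose_le_choose m hN
      _ ≤ n₀ ^ m := Nat.choose_le_pow n₀ m
  -- Small part
  have hSmallcard : Small.card ≤ (l + 2) * c * ∑ i ∈ Finset.Icc 1 (k + l), n₀ ^ i := by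
    set P : Finset (Fin c × Finset α) :=
      Finset.univ ×ˢ (Finset.Icc 1 (k + l)).biUnion (fun i => N.powersetCard i) with hP
    have hmaps : ∀ v ∈ Small, (cl v, S v) ∈ P := by
      intro v hv
      simp only [hSmall, Finset.mem_filter, not_le] at hv
      obtain ⟨hv1, hv2⟩ := hv
      refine Finset.mem_product.2 ⟨Finset.mem_univ _, Finset.mem_biUnion.2
        ⟨(S v).card, ?_, Finset.mem_powersetCard.2 ⟨hSsub v hv1, rfl⟩⟩⟩
      exact Finset.mem_Icc.2 ⟨Finset.card_pos.2 (hSne v hv1), by omega⟩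
    have hsum := Finset.card_eq_sum_card_fiberwise hmaps
    have hfiber : ∀ p ∈ P, (Small.filter fun v => (cl v, S v) = p).card ≤ l + 2 := by
      intro p hp
      obtain ⟨i, B⟩ := p
      have hB : B ∈ (Finset.Icc 1 (k + l)).biUnion (fun i => N.powersetCard i) :=
        (Finset.mem_product.1 hp).2
      obtain ⟨j, hj, hBj⟩ := Finset.mem_biUnion.1 hB
      obtain ⟨hBN, hBcard⟩ := Finset.mem_powersetCard.1 hBj
      calc (Small.filter fun v => (cl v, S v) = (i, B)).card
          ≤ (T'.filter fun v => cl v = i ∧ S v = B).card := by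
            apply Finset.card_le_card
            intro v hv
            simp only [hSmall, Finset.mem_filter, Prod.mk.injEq] at hv ⊢
            exact ⟨hv.1.1, hv.2⟩
        _ ≤ l + 2 := hfew i B hBN (by rw [hBcard]; exact (Finset.mem_Icc.1 hj).2)
    have hPcard : P.card ≤ c * ∑ i ∈ Finset.Icc 1 (k + l), n₀ ^ i := by
      rw [hP, Finset.card_product, Finset.card_univ, Fintype.card_fin]
      apply Nat.mul_le_mul_left
      calc ((Finset.Icc 1 (k + l)).biUnion fun i => N.powersetCard i).card
          ≤ ∑ i ∈ Finset.Icc 1 (k + l), (N.powersetCard i).card :=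
            Finset.card_biUnion_le
        _ ≤ ∑ i ∈ Finset.Icc 1 (k + l), n₀ ^ i := by
            apply Finset.sum_le_sum
            intro i _
            calc (N.powersetCard i).card = N.card.choose i :=
                  Finset.card_powersetCard i N
              _ ≤ n₀.choose i := Nat.choose_le_choose i hN
              _ ≤ n₀ ^ i := Nat.choose_le_pow n₀ i
    calc Small.card = ∑ p ∈ P, (Small.filter fun v => (cl v, S v) = p).card := hsum
      _ ≤ ∑ _p ∈ P, (l + 2) := Finset.sum_le_sum hfiber
      _ = (l + 2) * P.card := by rw [Finset.sum_const, smul_eq_mul, Nat.mul_comm]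
      _ ≤ (l + 2) * (c * ∑ i ∈ Finset.Icc 1 (k + l), n₀ ^ i) :=
          Nat.mul_le_mul_left _ hPcard
      _ = (l + 2) * c * ∑ i ∈ Finset.Icc 1 (k + l), n₀ ^ i := by ring
  omega
end
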